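/- Let 𝒞 be a constraint domain, π(X₁,…,Xₙ) = ∃Y₁…∃Y_k(B₁ ∧ … ∧ B_m) an existential 𝒞-constraint with atomic B₁,…,B_m and free variables among X₁,…,Xₙ, and 𝒫 a CLP(𝒞)-program including the clause C : p(X₁,…,Xₙ) ← B₁,…,B_m, where p ∈ DPⁿ occurs at the head of no other clause of 𝒫. Then for any n-tuple t₁,…,tₙ of terms and any finite satisfiable set Π of 𝒞-constraints: if 𝒫 ⊢_CHL (p(t₁,…,tₙ) ⇐ Π), then Π ⊨_𝒞 π(t₁,…,tₙ), where π(t₁,…,tₙ) is the result of applying the substitution {X₁ ↦ t₁, …, Xₙ ↦ tₙ} to π(X₁,…,Xₙ). -/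

import Mathlib

open Classical

namespace SQCLP

/-- A term signature: variables, basic values and ranked data constructors. -/
structure TSig where
  Var : Type
  BV : Type
  DC : Type
  dcArity : DC → ℕ

/-- Terms over a term signature. -/
inductive Term (S : TSig) : Type
  | var : S.Var → Term S
  | bv : S.BV → Term S
  | app : S.DC → List (Term S) → Term S

/-- Substitutions map variables to terms. -/
abbrev Subst (S : TSig) := S.Var → Term S

variable {S : TSig}

mutual
  /-- Application of a substitution to a term. -/
  def Term.subst (θ : Subst S) : Term S → Term S
    | .var x => θ x
    | .bv u => .bv u
    | .app c ts => .app c (Term.substList θ ts)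
  /-- Application of a substitution to a list of terms. -/
  def Term.substList (θ : Subst S) : List (Term S) → List (Term S)
    | [] => []
    | t :: ts => Term.subst θ t :: Term.substList θ ts
end

/-- Composition of substitutions: `(σ.comp ν) x = (σ x) ν`. -/
def Subst.comp (σ ν : Subst S) : Subst S := fun x => (σ x).subst ν

/-- A term is ground if it contains no variables. -/
inductive Term.IsGround : Term S → Prop
  | bv (u : S.BV) : IsGround (.bv u)
  | app (c : S.DC) (ts : List (Term S)) : (∀ t ∈ ts, IsGround t) → IsGround (.app c ts)

/-- The variable `x` occurs in the given term. -/
inductive Term.HasVar (x : S.Var) : Term S → Prop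
  | var : HasVar x (.var x)
  | app (c : S.DC) (ts : List (Term S)) (t : Term S) :
      t ∈ ts → HasVar x t → HasVar x (.app c ts)

/-- A valuation is a substitution all whose values are ground terms. -/
def IsValuation (η : Subst S) : Prop := ∀ x, (η x).IsGround

/-- A constraint domain over a term signature: ranked primitive predicate
symbols together with their interpretation on (ground) argument tuples. -/
structure ConstraintDomain (S : TSig) where
  PP : Type
  ppArity : PP → ℕ
  primTrue : PP → List (Term S) → Prop

variable {Cd : ConstraintDomain S}

/-- Atomic constraints: primitive atoms and equations. -/
inductive ACon (Cd : ConstraintDomain S) : Type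
  | prim : Cd.PP → List (Term S) → ACon Cd
  | eq : Term S → Term S → ACon Cd

/-- Application of a substitution to an atomic constraint. -/
def ACon.subst (θ : Subst S) : ACon Cd → ACon Cd
  | .prim r ts => .prim r (ts.map (Term.subst θ))
  | .eq t s => .eq (t.subst θ) (s.subst θ)

/-- Truth of a (ground) atomic constraint: primitive atoms via the
interpretation of the constraint domain; a ground equation is true iff its two
sides are syntactically identical. -/
def ACon.holds : ACon Cd → Prop
  | .prim r ts => Cd.primTrue r ts
  | .eq t s => t = s

/-- A valuation `η` solves an atomic constraint `c` iff `c η` is true. -/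
def solves (η : Subst S) (c : ACon Cd) : Prop := (c.subst η).holds

/-- The variable `x` occurs in the atomic constraint. -/
inductive ACon.HasVar (x : S.Var) : ACon Cd → Prop
  | prim (r : Cd.PP) (ts : List (Term S)) (t : Term S) :
      t ∈ ts → Term.HasVar x t → HasVar x (.prim r ts)
  | eqL (t s : Term S) : Term.HasVar x t → HasVar x (.eq t s)
  | eqR (t s : Term S) : Term.HasVar x s → HasVar x (.eq t s)

/-- The set of solutions (valuations) of a set of atomic constraints. -/
def SolC (Pi : Set (ACon Cd)) : Set (Subst S) :=
  {η | IsValuation η ∧ ∀ c ∈ Pi, solves η c}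

/-- A set of constraints is satisfiable iff it has some solution. -/
def Satisfiable (Pi : Set (ACon Cd)) : Prop := (SolC Pi).Nonempty

/-- Constraint entailment `Pi ⊨ c`. -/
def entails (Pi : Set (ACon Cd)) (c : ACon Cd) : Prop := ∀ η ∈ SolC Pi, solves η c

/-- An existential constraint `∃ Y₁ … Y_k (B₁ ∧ … ∧ B_m)`. -/
structure ExCon (Cd : ConstraintDomain S) where
  evars : List S.Var
  body : List (ACon Cd)

/-- A valuation `η` solves an existential constraint iff some valuation
agreeing with `η` except possibly on the existential variables makes every
atomic constraint of the body true. -/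
def ExCon.SolvedBy (e : ExCon Cd) (η : Subst S) : Prop :=
  ∃ η' : Subst S, IsValuation η' ∧ (∀ x, x ∉ e.evars → η' x = η x) ∧
    ∀ c ∈ e.body, solves η' c

/-- Entailment of an existential constraint. -/
def entailsEx (Pi : Set (ACon Cd)) (e : ExCon Cd) : Prop := ∀ η ∈ SolC Pi, e.SolvedBy η

/-- A free variable of an existential constraint. -/
def ExCon.FVar (e : ExCon Cd) (x : S.Var) : Prop :=
  x ∉ e.evars ∧ ∃ c ∈ e.body, ACon.HasVar x c

/-- Atoms over a constraint domain and an alphabet `DP` of defined predicate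
symbols: defined atoms, primitive atoms and equations. -/
inductive Atom (Cd : ConstraintDomain S) (DP : Type) : Type
  | defined : DP → List (Term S) → Atom Cd DP
  | prim : Cd.PP → List (Term S) → Atom Cd DP
  | eq : Term S → Term S → Atom Cd DP

variable {DP : Type}

/-- Application of a substitution to an atom. -/
def Atom.subst (θ : Subst S) : Atom Cd DP → Atom Cd DP
  | .defined p ts => .defined p (ts.map (Term.subst θ))
  | .prim r ts => .prim r (ts.map (Term.subst θ))
  | .eq t s => .eq (t.subst θ) (s.subst θ)

/-- Atomic constraints regarded as atoms. -/
def ACon.toAtom : ACon Cd → Atom Cd DP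
  | .prim r ts => .prim r ts
  | .eq t s => .eq t s

/-- The variable `x` occurs in the atom. -/
inductive Atom.HasVar (x : S.Var) : Atom Cd DP → Prop
  | defined (p : DP) (ts : List (Term S)) (t : Term S) :
      t ∈ ts → Term.HasVar x t → HasVar x (.defined p ts)
  | prim (r : Cd.PP) (ts : List (Term S)) (t : Term S) :
      t ∈ ts → Term.HasVar x t → HasVar x (.prim r ts)
  | eqL (t s : Term S) : Term.HasVar x t → HasVar x (.eq t s)
  | eqR (t s : Term S) : Term.HasVar x s → HasVar x (.eq t s)

/-- A clause `p(t₁,…,tₙ) ← B₁,…,Bₘ` of a CLP(𝒞)-program. -/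
structure Clause (Cd : ConstraintDomain S) (DP : Type) where
  head : DP
  args : List (Term S)
  body : List (Atom Cd DP)

/-- Constrained Horn Logic derivability `𝒫 ⊢_CHL (A ⇐ Pi)`, with the inference
rules (DA), (EA) and (PA). -/
inductive CHL (P : Set (Clause Cd DP)) (Pi : Set (ACon Cd)) : Atom Cd DP → Prop
  | DA (cl : Clause Cd DP) (θ : Subst S) (args' : List (Term S))
      (hmem : cl ∈ P) (hlen : args'.length = cl.args.length)
      (hargs : ∀ (i : ℕ) (h1 : i < args'.length) (h2 : i < cl.args.length),
        CHL P Pi (.eq (args'.get ⟨i, h1⟩) ((cl.args.get ⟨i, h2⟩).subst θ)))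
      (hbody : ∀ B ∈ cl.body, CHL P Pi (B.subst θ)) :
      CHL P Pi (.defined cl.head args')
  | EA (t s : Term S) (h : entails Pi (.eq t s)) : CHL P Pi (.eq t s)
  | PA (r : Cd.PP) (ts : List (Term S)) (h : entails Pi (.prim r ts)) :
      CHL P Pi (.prim r ts)

end SQCLP

/-!
Since `C₀` is the only clause for `p`, a derivation of `p(ts) ⇐ Π` ends with (DA) applied to `C₀`
with some `θ`, so `Π` entails `tᵢ == Xᵢθ` and every `Bⱼθ`. Given a solution `η` of `Π`, the
valuation that agrees with `η` off the `Ys` and sends each `Y` to `(Yθ)η` solves every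
`Bⱼ{Xs ↦ ts}`: on the free variables `Xᵢ` of `π` it agrees with `θη` because `η` solves
`tᵢ == Xᵢθ` and the `tᵢ` do not mention the `Ys`, and on the `Ys` by construction.
-/

namespace SQCLP

variable {S : TSig} {Cd : ConstraintDomain S} {DP : Type}

mutual
  theorem Term.subst_comp (θ ν : Subst S) : ∀ t : Term S,
      (t.subst θ).subst ν = t.subst (θ.comp ν)
    | .var _ => rfl
    | .bv _ => rfl
    | .app c ts => by
        simp only [Term.subst, Term.substList_comp θ ν ts]
  theorem Term.substList_comp (θ ν : Subst S) : ∀ ts : List (Term S),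
      Term.substList ν (Term.substList θ ts) = Term.substList (θ.comp ν) ts
    | [] => rfl
    | t :: ts => by
        simp only [Term.substList, Term.subst_comp θ ν t, Term.substList_comp θ ν ts]
end

mutual
  theorem Term.subst_congr (σ τ : Subst S) : ∀ t : Term S,
      (∀ x, t.HasVar x → σ x = τ x) → t.subst σ = t.subst τ
    | .var x, h => h x .var
    | .bv _, _ => rfl
    | .app c ts, h => by
        simp only [Term.subst,
          Term.substList_congr σ τ ts (fun x t ht hv => h x (.app c ts t ht hv))]
  theorem Term.substList_congr (σ τ : Subst S) : ∀ ts : List (Term S),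
      (∀ x t, t ∈ ts → t.HasVar x → σ x = τ x) →
      Term.substList σ ts = Term.substList τ ts
    | [], _ => rfl
    | t :: ts, h => by
        simp only [Term.substList,
          Term.subst_congr σ τ t (fun x hv => h x t List.mem_cons_self hv),
          Term.substList_congr σ τ ts (fun x t' ht hv => h x t' (List.mem_cons_of_mem t ht) hv)]
end

mutual
  theorem Term.isGround_subst {η : Subst S} (hη : IsValuation η) : ∀ t : Term S,
      (t.subst η).IsGround
    | .var x => hη x
    | .bv u => .bv u
    | .app c ts => .app c _ (Term.isGround_substList hη ts)
  theorem Term.isGround_substList {η : Subst S} (hη : IsValuation η) :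
      ∀ ts : List (Term S), ∀ t ∈ Term.substList η ts, t.IsGround
    | [], _, ht => absurd ht List.not_mem_nil
    | t' :: ts, t, ht => by
        rcases List.mem_cons.1 ht with rfl | ht
        · exact Term.isGround_subst hη t'
        · exact Term.isGround_substList hη ts t ht
end

theorem ACon.subst_comp (θ ν : Subst S) (c : ACon Cd) :
    (c.subst θ).subst ν = c.subst (θ.comp ν) := by
  cases c with
  | prim r ts =>
      simp only [ACon.subst, List.map_map]
      exact congrArg _ (List.map_congr_left fun t _ => Term.subst_comp θ ν t)
  | eq t s => simp only [ACon.subst, Term.subst_comp]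

theorem ACon.subst_congr (σ τ : Subst S) (c : ACon Cd)
    (h : ∀ x, c.HasVar x → σ x = τ x) : c.subst σ = c.subst τ := by
  cases c with
  | prim r ts =>
      simp only [ACon.subst]
      exact congrArg _ (List.map_congr_left fun t ht =>
        Term.subst_congr σ τ t fun x hv => h x (.prim r ts t ht hv))
  | eq t s =>
      simp only [ACon.subst, Term.subst_congr σ τ t fun x hv => h x (.eqL t s hv),
        Term.subst_congr σ τ s fun x hv => h x (.eqR t s hv)]

theorem ACon.toAtom_subst (θ : Subst S) (c : ACon Cd) :
    (c.toAtom : Atom Cd DP).subst θ = (c.subst θ).toAtom := by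
  cases c <;> rfl

theorem ExCon.solvedBy_map_subst {e : ExCon Cd} {σ θ η : Subst S} (hη : IsValuation η)
    (hbody : ∀ c ∈ e.body, solves η (c.subst θ))
    (hevars : ∀ y ∈ e.evars, σ y = .var y)
    (hfresh : ∀ x, e.FVar x → ∀ y ∈ e.evars, ¬ (σ x).HasVar y)
    (hagree : ∀ x, e.FVar x → (σ x).subst η = (θ x).subst η) :
    ExCon.SolvedBy ⟨e.evars, e.body.map (ACon.subst σ)⟩ η := by
  set η' : Subst S := fun x => if x ∈ e.evars then (θ x).subst η else η x with hη'
  have hvar : IsValuation η' := fun x => by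
    by_cases hx : x ∈ e.evars
    · simpa [hη', hx] using Term.isGround_subst hη (θ x)
    · simpa [hη', hx] using hη x
  refine ⟨η', hvar, fun x hx => if_neg hx, ?_⟩
  intro c' hc'
  obtain ⟨c, hc, rfl⟩ := List.mem_map.1 hc'
  have hcomp : ∀ x, c.HasVar x → (σ.comp η') x = (θ.comp η) x := by
    intro x hx
    by_cases hxe : x ∈ e.evars
    · simp [Subst.comp, hevars x hxe, Term.subst, hη', hxe]
    · have hfv : e.FVar x := ⟨hxe, c, hc, hx⟩
      have hη'η : (σ x).subst η' = (σ x).subst η :=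
        Term.subst_congr _ _ _ fun y hy => if_neg fun hye => hfresh x hfv y hye hy
      rw [Subst.comp, Subst.comp, hη'η, hagree x hfv]
  unfold solves
  rw [ACon.subst_comp, ACon.subst_congr _ _ c hcomp, ← ACon.subst_comp]
  exact hbody c hc

variable {P : Set (Clause Cd DP)} {Pi : Set (ACon Cd)}

theorem CHL.entails_of_toAtom {c : ACon Cd} (h : CHL P Pi c.toAtom) : entails Pi c := by
  cases c with
  | prim r ts => cases h with | PA _ _ h => exact h
  | eq t s => cases h with | EA _ _ h => exact h

theorem CHL.of_defined_of_unique {p : DP} {ts : List (Term S)} {C : Clause Cd DP}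
    (honly : ∀ cl ∈ P, cl.head = p → cl = C) (h : CHL P Pi (.defined p ts)) :
    ∃ θ : Subst S, List.Forall₂ (fun t s => CHL P Pi (.eq t (s.subst θ))) ts C.args ∧
      ∀ B ∈ C.body, CHL P Pi (B.subst θ) := by
  cases h with
  | DA cl θ _ hmem hlen hargs hbody =>
    obtain rfl := honly cl hmem rfl
    exact ⟨θ, List.forall₂_iff_get.2 ⟨hlen, hargs⟩, hbody⟩

theorem CHL.entails_of_constraint_clause {p : DP} {ts : List (Term S)} {Xs : List S.Var}
    {body : List (ACon Cd)}
    (honly : ∀ cl ∈ P, cl.head = p → cl = ⟨p, Xs.map Term.var, body.map ACon.toAtom⟩)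
    (h : CHL P Pi (.defined p ts)) :
    ∃ θ : Subst S, List.Forall₂ (fun t x => entails Pi (.eq t (θ x))) ts Xs ∧
      ∀ c ∈ body, entails Pi (c.subst θ) := by
  obtain ⟨θ, hargs, hbody⟩ := h.of_defined_of_unique honly
  refine ⟨θ, ?_, fun c hc => ?_⟩
  · rw [List.forall₂_map_right_iff] at hargs
    exact hargs.imp fun t x h => CHL.entails_of_toAtom (c := .eq t (θ x)) h
  · have hc' := hbody _ (List.mem_map_of_mem hc)
    rw [ACon.toAtom_subst] at hc'
    exact hc'.entails_of_toAtom

/-- Lemma dec, item 1: let `π = ∃Ys (body)` be an existential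
constraint whose free variables are among the pairwise distinct variables
`Xs`, and let `𝒫` be a CLP(𝒞)-program containing the clause
`C₀ : p(Xs) ← body` in which `p` heads no other clause of `𝒫`.  Then, for any
tuple `ts` of terms (in which the existential variables `Ys` do not occur) and
any finite satisfiable constraint set `Π`: if `𝒫 ⊢_CHL (p(ts) ⇐ Π)` then
`Π ⊨ π(ts)`, where `π(ts)` is obtained by applying the substitution
`{Xs ↦ ts}` to `π(Xs)`. -/
theorem stmt4 {S : TSig} {Cd : ConstraintDomain S} {DP : Type}
    (p : DP) (n : ℕ) (Xs : List S.Var) (hXlen : Xs.length = n) (hXnd : Xs.Nodup)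
    (pi : ExCon Cd)
    (hXfresh : ∀ x ∈ Xs, x ∉ pi.evars)
    (hfv : ∀ c ∈ pi.body, ∀ x, ACon.HasVar x c → x ∈ Xs ∨ x ∈ pi.evars)
    (C₀ : Clause Cd DP)
    (hC₀ : C₀ = ⟨p, Xs.map Term.var, pi.body.map ACon.toAtom⟩)
    (P : Set (Clause Cd DP)) (hmem : C₀ ∈ P)
    (honly : ∀ cl ∈ P, cl.head = p → cl = C₀)
    (ts : List (Term S)) (hts : ts.length = n)
    (htfresh : ∀ t ∈ ts, ∀ y ∈ pi.evars, ¬ t.HasVar y)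
    (θ₀ : Subst S)
    (hθ₀ : ∀ (i : ℕ) (h1 : i < Xs.length) (h2 : i < ts.length),
      θ₀ (Xs.get ⟨i, h1⟩) = ts.get ⟨i, h2⟩)
    (hθ₀' : ∀ x, x ∉ Xs → θ₀ x = Term.var x)
    (Pi : Set (ACon Cd)) (hfin : Pi.Finite) (hsat : Satisfiable Pi)
    (hder : CHL P Pi (.defined p ts)) :
    entailsEx Pi ⟨pi.evars, pi.body.map (ACon.subst θ₀)⟩ := by
  subst hC₀
  obtain ⟨θ, hargs, hbody⟩ := hder.entails_of_constraint_clause honly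
  have hmap : Xs.map θ₀ = ts :=
    List.ext_get (by simp [hargs.length_eq]) fun i h₁ h₂ => by
      simpa using hθ₀ i (by simpa using h₁) h₂
  rw [← hmap, List.forall₂_map_left_iff, List.forall₂_same] at hargs
  have hmemXs : ∀ x, pi.FVar x → x ∈ Xs := fun x ⟨hxe, c, hc, hx⟩ =>
    (hfv c hc x hx).resolve_right hxe
  intro η hη
  refine ExCon.solvedBy_map_subst hη.1 (fun c hc => hbody c hc η hη)
    (fun y hy => hθ₀' y fun hyX => hXfresh y hyX hy) (fun x hx => ?_) (fun x hx => ?_)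
  · exact htfresh _ (hmap ▸ List.mem_map_of_mem (hmemXs x hx))
  · exact hargs x (hmemXs x hx) η hη

end SQCLP
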